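/- arXiv:2101.00053 — 3 statements merged into one kernel-verified Lean document; each statement's English description precedes it below -/
import Mathlib

section
/- Let X be an infinite compact metric space and f : X → X a continuous map. If f is topologically transitive and the set of periodic points of f is dense in X, then f has sensitive dependence on initial conditions. -/
/-- Topological transitivity: for any nonempty open sets `U, V` there is `n > 0`
with `U ∩ f⁻ⁿ(V) ≠ ∅`. -/
def IsTopTransitive {X : Type*} [TopologicalSpace X] (f : X → X) : Prop :=
  ∀ U V : Set X, IsOpen U → IsOpen V → U.Nonempty → V.Nonempty →
    ∃ n : ℕ, 0 < n ∧ (U ∩ f^[n] ⁻¹' V).Nonempty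

/-- The set of periodic points of `f` is dense. -/
def DensePeriodicPts {X : Type*} [TopologicalSpace X] (f : X → X) : Prop :=
  Dense {x : X | ∃ p : ℕ, 0 < p ∧ f^[p] x = x}

/-- Sensitive dependence on initial conditions. -/
def SensitiveDependence {X : Type*} [MetricSpace X] (f : X → X) : Prop :=
  ∃ ε > (0 : ℝ), ∀ x : X, ∀ δ > (0 : ℝ), ∃ y : X,
    dist x y < δ ∧ ∃ n : ℕ, ε ≤ dist (f^[n] x) (f^[n] y)

private lemma iter_mul_self' {X : Type*} {f : X → X} {m : ℕ} {x : X}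
    (h : f^[m] x = x) : ∀ k, f^[m * k] x = x := by
  intro k
  induction k with
  | zero => simp
  | succ k ih =>
    rw [Nat.mul_succ, Function.iterate_add_apply, h, ih]

private lemma iter_mod' {X : Type*} {f : X → X} {m : ℕ} {x : X}
    (h : f^[m] x = x) (n : ℕ) : f^[n] x = f^[n % m] x := by
  conv_lhs => rw [← Nat.mod_add_div n m]
  rw [Function.iterate_add_apply, iter_mul_self' h]

/-- On an infinite compact metric space, a continuous, topologically transitive map
with dense periodic points has sensitive dependence on initial conditions. -/
theorem transitive_densePeriodic_implies_sensitive
    {X : Type*} [MetricSpace X] [CompactSpace X] [Infinite X]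
    (f : X → X) (hf : Continuous f)
    (htrans : IsTopTransitive f) (hper : DensePeriodicPts f) :
    SensitiveDependence f := by
  classical
  -- a first periodic point p
  obtain ⟨p, hpmem, -⟩ := hper.exists_mem_open isOpen_univ Set.univ_nonempty
  obtain ⟨mp, hmp, hpp⟩ := hpmem
  -- its (finite, closed) orbit
  set Op : Set X := Set.range (fun i : Fin mp => f^[(i : ℕ)] p) with hOpdef
  have hOpfin : Op.Finite := Set.finite_range _
  have hOpcl : IsClosed Op := hOpfin.isClosed
  -- a point outside the orbit, and a periodic point q near it
  have hcompl : Opᶜ.Nonempty := (hOpfin.infinite_compl).nonempty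
  obtain ⟨q, hqmem, hqOp⟩ := hper.exists_mem_open hOpcl.isOpen_compl hcompl
  obtain ⟨mq, hmq, hqq⟩ := hqmem
  -- orbits of p and q are disjoint
  have hdisj : ∀ i j : ℕ, f^[i] p ≠ f^[j] q := by
    intro i j h
    apply hqOp
    have hq1 : q = f^[mq * (j + 1) - j] (f^[j] q) := by
      rw [← Function.iterate_add_apply,
        Nat.sub_add_cancel (by nlinarith : j ≤ mq * (j + 1)),
        iter_mul_self' hqq]
    rw [hq1, ← h, ← Function.iterate_add_apply, iter_mod' hpp]
    exact ⟨⟨_, Nat.mod_lt _ hmp⟩, rfl⟩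
  -- minimal distance between the two orbits
  set S : Finset (ℕ × ℕ) := Finset.range mp ×ˢ Finset.range mq with hSdef
  have hSne : S.Nonempty := by
    refine ⟨(0, 0), ?_⟩
    simp [hSdef, hmp, hmq]
  set d0 : ℝ := S.inf' hSne (fun ij => dist (f^[ij.1] p) (f^[ij.2] q)) with hd0def
  have hd0pos : 0 < d0 := by
    rw [hd0def, Finset.lt_inf'_iff]
    intro ij _
    exact dist_pos.2 (hdisj _ _)
  have hd0le : ∀ i j : ℕ, d0 ≤ dist (f^[i] p) (f^[j] q) := by
    intro i j
    rw [iter_mod' hpp i, iter_mod' hqq j]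
    have hmem : (i % mp, j % mq) ∈ S := Finset.mem_product.2
      ⟨Finset.mem_range.2 (Nat.mod_lt _ hmp), Finset.mem_range.2 (Nat.mod_lt _ hmq)⟩
    exact Finset.inf'_le _ hmem
  -- every point is at distance ≥ d0/2 from one of the two orbits
  have hfar : ∀ x : X, (∀ i, d0 / 2 ≤ dist x (f^[i] p)) ∨
      (∀ i, d0 / 2 ≤ dist x (f^[i] q)) := by
    intro x
    by_contra hcon
    push_neg at hcon
    obtain ⟨⟨i, hi⟩, ⟨j, hj⟩⟩ := hcon
    have h1 := hd0le i j
    have h2 := dist_triangle (f^[i] p) x (f^[j] q)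
    rw [dist_comm (f^[i] p) x] at h2
    linarith
  -- the sensitivity constant
  refine ⟨d0 / 8, by linarith, ?_⟩
  intro x δ hδ
  set ε : ℝ := d0 / 8 with hεdef
  have hε : 0 < ε := by rw [hεdef]; linarith
  set δ' : ℝ := min δ ε with hδ'def
  have hδ' : 0 < δ' := lt_min hδ hε
  -- a periodic point z near x
  obtain ⟨z, hzmem, hzball⟩ := hper.exists_mem_open Metric.isOpen_ball
    ⟨x, Metric.mem_ball_self hδ'⟩
  obtain ⟨m, hm, hz⟩ := hzmem
  have hzx : dist z x < δ' := by simpa [Metric.mem_ball] using hzball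
  -- a point r whose orbit stays at distance ≥ 4ε from x
  have hr : ∃ r : X, ∀ i, 4 * ε ≤ dist x (f^[i] r) := by
    rcases hfar x with h | h
    · exact ⟨p, fun i => by have := h i; rw [hεdef]; linarith⟩
    · exact ⟨q, fun i => by have := h i; rw [hεdef]; linarith⟩
  obtain ⟨r, hxr⟩ := hr
  -- the open set V
  set V : Set X := ⋂ i : Fin (m + 1), f^[(i : ℕ)] ⁻¹' Metric.ball (f^[(i : ℕ)] r) ε
    with hVdef
  have hVopen : IsOpen V :=
    isOpen_iInter_of_finite fun i =>
      (Metric.isOpen_ball).preimage (hf.iterate _)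
  have hVne : V.Nonempty :=
    ⟨r, Set.mem_iInter.2 fun i => Metric.mem_ball_self hε⟩
  -- transitivity
  obtain ⟨n, hn, y, hyU, hyV⟩ := htrans (Metric.ball x δ') V Metric.isOpen_ball
    hVopen ⟨x, Metric.mem_ball_self hδ'⟩ hVne
  have hyx : dist y x < δ' := by simpa [Metric.mem_ball] using hyU
  -- choose the time N
  set j : ℕ := m - n % m with hjdef
  have hnm := Nat.div_add_mod n m
  have hmod := Nat.mod_lt n hm
  have hj1 : 1 ≤ j := by omega
  have hjm : j ≤ m := by omega
  set N : ℕ := j + n with hNdef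
  have hNmul : N = m * (n / m + 1) := by
    rw [hNdef, hjdef, Nat.mul_succ]; omega
  have hzN : f^[N] z = z := by rw [hNmul]; exact iter_mul_self' hz _
  -- f^[N] y is ε-close to f^[j] r
  have hyN : dist (f^[N] y) (f^[j] r) < ε := by
    have h1 : f^[n] y ∈ f^[j] ⁻¹' Metric.ball (f^[j] r) ε := by
      have := Set.mem_iInter.1 hyV ⟨j, by omega⟩
      simpa using this
    have h2 : f^[N] y = f^[j] (f^[n] y) := Function.iterate_add_apply f j n y
    rw [h2]
    simpa [Metric.mem_ball] using h1
  -- the key estimate : dist (f^[N] z) (f^[N] y) ≥ 2ε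
  have hkey : 2 * ε ≤ dist (f^[N] z) (f^[N] y) := by
    rw [hzN]
    have h1 := hxr j
    have h2 := dist_triangle x (f^[N] y) (f^[j] r)
    have h3 := dist_triangle x z (f^[N] y)
    rw [dist_comm x z] at h3
    have hzε : dist z x < ε := lt_of_lt_of_le hzx (min_le_right _ _)
    linarith
  have htri := dist_triangle (f^[N] z) (f^[N] x) (f^[N] y)
  rw [dist_comm (f^[N] z) (f^[N] x)] at htri
  by_cases hc : ε ≤ dist (f^[N] x) (f^[N] z)
  · exact ⟨z, by rw [dist_comm]; exact lt_of_lt_of_le hzx (min_le_left _ _),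
      N, hc⟩
  · refine ⟨y, by rw [dist_comm]; exact lt_of_lt_of_le hyx (min_le_left _ _),
      N, by push_neg at hc; linarith⟩
end

section
/- Let f, g : [0,1] → [0,1] be maps with g(x) = 1 − f(x) for all x (graphs symmetric about the horizontal line y = 1/2). Suppose f is a full branch map with exactly k full branches, i.e., there is a partition of [0,1] into k subintervals w₁, …, w_k such that f restricted to the interior of each wᵢ is a continuous bijection onto the open interval (0,1). Then the fuzzy XOR combination f xor g, given by (f xor g)(x) = |f(x) − g(x)|, is a full branch map with exactly 2k full branches: each wᵢ splits into two subintervals on each of which x ↦ 2|f(x) − 1/2| restricted to the interior is a bijection onto (0,1). -/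
open Set

/-- If `f` maps `t` bijectively onto `(0,1)` and `s ⊆ t` is exactly the part of `t`
where `f < 1/2`, then `x ↦ |2 f x - 1|` maps `s` bijectively onto `(0,1)`. -/
lemma branch_half_lt (f : ℝ → ℝ) (s t : Set ℝ) (hst : s ⊆ t)
    (hb : Set.BijOn f t (Set.Ioo 0 1))
    (hlt : ∀ x ∈ s, f x < 1 / 2)
    (hmem : ∀ x ∈ t, f x < 1 / 2 → x ∈ s) :
    Set.BijOn (fun x => |2 * f x - 1|) s (Set.Ioo 0 1) := by
  have habs : ∀ x ∈ s, |2 * f x - 1| = 1 - 2 * f x := by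
    intro x hx
    rw [abs_of_neg (by linarith [hlt x hx])]
    ring
  refine ⟨?_, ?_, ?_⟩
  · intro x hx
    have h1 := hb.mapsTo (hst hx)
    have h2 := hlt x hx
    show |2 * f x - 1| ∈ Set.Ioo (0:ℝ) 1
    rw [habs x hx]
    exact ⟨by linarith [h1.2, h1.1], by linarith [h1.1]⟩
  · intro x hx y hy h
    simp only [habs x hx, habs y hy] at h
    exact hb.injOn (hst hx) (hst hy) (by linarith)
  · intro y hy
    obtain ⟨hy0, hy1⟩ := hy
    obtain ⟨x, hx, hfx⟩ := hb.surjOn (show (1 - y) / 2 ∈ Set.Ioo (0:ℝ) 1 by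
      constructor <;> [linarith; linarith])
    have hxs : x ∈ s := hmem x hx (by rw [hfx]; linarith)
    refine ⟨x, hxs, ?_⟩
    show |2 * f x - 1| = y
    rw [habs x hxs, hfx]
    ring

/-- If `f` maps `t` bijectively onto `(0,1)` and `s ⊆ t` is exactly the part of `t`
where `f > 1/2`, then `x ↦ |2 f x - 1|` maps `s` bijectively onto `(0,1)`. -/
lemma branch_half_gt (f : ℝ → ℝ) (s t : Set ℝ) (hst : s ⊆ t)
    (hb : Set.BijOn f t (Set.Ioo 0 1))
    (hlt : ∀ x ∈ s, 1 / 2 < f x)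
    (hmem : ∀ x ∈ t, 1 / 2 < f x → x ∈ s) :
    Set.BijOn (fun x => |2 * f x - 1|) s (Set.Ioo 0 1) := by
  have habs : ∀ x ∈ s, |2 * f x - 1| = 2 * f x - 1 := by
    intro x hx
    rw [abs_of_pos (by linarith [hlt x hx])]
  refine ⟨?_, ?_, ?_⟩
  · intro x hx
    have h1 := hb.mapsTo (hst hx)
    have h2 := hlt x hx
    show |2 * f x - 1| ∈ Set.Ioo (0:ℝ) 1
    rw [habs x hx]
    exact ⟨by linarith, by linarith [h1.2]⟩
  · intro x hx y hy h
    simp only [habs x hx, habs y hy] at h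
    exact hb.injOn (hst hx) (hst hy) (by linarith)
  · intro y hy
    obtain ⟨hy0, hy1⟩ := hy
    obtain ⟨x, hx, hfx⟩ := hb.surjOn (show (1 + y) / 2 ∈ Set.Ioo (0:ℝ) 1 by
      constructor <;> [linarith; linarith])
    have hxs : x ∈ s := hmem x hx (by rw [hfx]; linarith)
    refine ⟨x, hxs, ?_⟩
    show |2 * f x - 1| = y
    rw [habs x hxs, hfx]
    ring

/-- On each full branch of `f`, there is a point `c` where `f c = 1/2`, splitting the
branch interval into two pieces on each of which `x ↦ |2 f x - 1|` is a bijection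
onto `(0,1)`. -/
lemma xor_key (f : ℝ → ℝ) (p q : ℝ) (hpq : p < q)
    (hc : ContinuousOn f (Set.Ioo p q))
    (hb : Set.BijOn f (Set.Ioo p q) (Set.Ioo 0 1)) :
    ∃ c ∈ Set.Ioo p q,
      Set.BijOn (fun x => |2 * f x - 1|) (Set.Ioo p c) (Set.Ioo 0 1) ∧
      Set.BijOn (fun x => |2 * f x - 1|) (Set.Ioo c q) (Set.Ioo 0 1) := by
  obtain ⟨c, hcmem, hfc⟩ := hb.surjOn (show (1:ℝ)/2 ∈ Set.Ioo (0:ℝ) 1 by norm_num)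
  have hsubL : Set.Ioo p c ⊆ Set.Ioo p q := fun x hx => ⟨hx.1, hx.2.trans hcmem.2⟩
  have hsubR : Set.Ioo c q ⊆ Set.Ioo p q := fun x hx => ⟨hcmem.1.trans hx.1, hx.2⟩
  rcases ContinuousOn.strictMonoOn_of_injOn_Ioo hpq hc hb.injOn with hm | hm
  · refine ⟨c, hcmem, ?_, ?_⟩
    · refine branch_half_lt f _ _ hsubL hb ?_ ?_
      · intro x hx
        have := hm (hsubL hx) hcmem hx.2
        linarith [hfc ▸ this]
      · intro x hx hfx
        refine ⟨hx.1, ?_⟩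
        rcases lt_trichotomy x c with h | h | h
        · exact h
        · rw [h, hfc] at hfx; linarith
        · have := hm hcmem hx h
          rw [hfc] at this; linarith
    · refine branch_half_gt f _ _ hsubR hb ?_ ?_
      · intro x hx
        have := hm hcmem (hsubR hx) hx.1
        linarith [hfc ▸ this]
      · intro x hx hfx
        refine ⟨?_, hx.2⟩
        rcases lt_trichotomy c x with h | h | h
        · exact h
        · rw [← h, hfc] at hfx; linarith
        · have := hm hx hcmem h
          rw [hfc] at this; linarith
  · refine ⟨c, hcmem, ?_, ?_⟩
    · refine branch_half_gt f _ _ hsubL hb ?_ ?_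
      · intro x hx
        have := hm (hsubL hx) hcmem hx.2
        linarith [hfc ▸ this]
      · intro x hx hfx
        refine ⟨hx.1, ?_⟩
        rcases lt_trichotomy x c with h | h | h
        · exact h
        · rw [h, hfc] at hfx; linarith
        · have := hm hcmem hx h
          rw [hfc] at this; linarith
    · refine branch_half_lt f _ _ hsubR hb ?_ ?_
      · intro x hx
        have := hm hcmem (hsubR hx) hx.1
        linarith [hfc ▸ this]
      · intro x hx hfx
        refine ⟨?_, hx.2⟩
        rcases lt_trichotomy c x with h | h | h
        · exact h
        · rw [← h, hfc] at hfx; linarith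
        · have := hm hx hcmem h
          rw [hfc] at this; linarith

/-- If `f : [0,1] → [0,1]` is a full branch map with exactly `k` branches, given by a
partition `0 = a 0 < a 1 < ⋯ < a k = 1` of `[0,1]` into subintervals on whose interiors
`f` is a continuous bijection onto `(0,1)`, and `g(x) = 1 - f(x)` (mirror symmetry about
`y = 1/2`), then the fuzzy XOR combination `x ↦ |f x - g x|` is a full branch map with
exactly `2k` branches: each branch interval splits into two subintervals, on the interior
of each of which the XOR map is a bijection onto `(0,1)`. -/
theorem fuzzy_xor_doubles_full_branches (f g : ℝ → ℝ) (k : ℕ) (hk : 0 < k)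
    (hf : ∀ x ∈ Set.Icc (0 : ℝ) 1, f x ∈ Set.Icc (0 : ℝ) 1)
    (hmirror : ∀ x ∈ Set.Icc (0 : ℝ) 1, g x = 1 - f x)
    (a : ℕ → ℝ) (ha0 : a 0 = 0) (hak : a k = 1)
    (hinc : ∀ i < k, a i < a (i + 1))
    (hcont : ∀ i < k, ContinuousOn f (Set.Ioo (a i) (a (i + 1))))
    (hbij : ∀ i < k, Set.BijOn f (Set.Ioo (a i) (a (i + 1))) (Set.Ioo (0 : ℝ) 1)) :
    ∃ b : ℕ → ℝ, b 0 = 0 ∧ b (2 * k) = 1 ∧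
      (∀ j < 2 * k, b j < b (j + 1)) ∧
      (∀ i ≤ k, b (2 * i) = a i) ∧
      (∀ j < 2 * k,
        Set.BijOn (fun x => |f x - g x|) (Set.Ioo (b j) (b (j + 1)))
          (Set.Ioo (0 : ℝ) 1)) := by
  -- monotonicity of the partition points
  have hmono : ∀ i j : ℕ, i ≤ j → j ≤ k → a i ≤ a j := by
    intro i j hij hjk
    induction j with
    | zero =>
      have : i = 0 := Nat.le_zero.mp hij
      rw [this]
    | succ n ih =>
      rcases Nat.eq_or_lt_of_le hij with h | h
      · rw [h]
      · exact le_trans (ih (by omega) (by omega)) (le_of_lt (hinc n (by omega)))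
  -- choose the splitting points
  have key : ∀ i : ℕ, ∃ c : ℝ, i < k →
      c ∈ Set.Ioo (a i) (a (i + 1)) ∧
      Set.BijOn (fun x => |2 * f x - 1|) (Set.Ioo (a i) c) (Set.Ioo 0 1) ∧
      Set.BijOn (fun x => |2 * f x - 1|) (Set.Ioo c (a (i + 1))) (Set.Ioo 0 1) := by
    intro i
    by_cases hi : i < k
    · obtain ⟨c, h1, h2, h3⟩ := xor_key f (a i) (a (i + 1)) (hinc i hi) (hcont i hi)
        (hbij i hi)
      exact ⟨c, fun _ => ⟨h1, h2, h3⟩⟩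
    · exact ⟨0, fun h => absurd h hi⟩
  choose c hc using key
  refine ⟨fun j => if j % 2 = 0 then a (j / 2) else c (j / 2), by simpa, ?_, ?_, ?_, ?_⟩
  · have h1 : 2 * k % 2 = 0 := by omega
    have h2 : 2 * k / 2 = k := by omega
    simp [h1, h2, hak]
  · -- strictly increasing
    intro j hj
    rcases Nat.even_or_odd j with ⟨i, hi⟩ | ⟨i, hi⟩
    · have hik : i < k := by omega
      have e1 : j % 2 = 0 := by omega
      have e2 : j / 2 = i := by omega
      have e3 : (j + 1) % 2 = 1 := by omega
      have e4 : (j + 1) / 2 = i := by omega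
      simp only [e1, e2, e3, e4]
      simpa using (hc i hik).1.1
    · have hik : i < k := by omega
      have e1 : j % 2 = 1 := by omega
      have e2 : j / 2 = i := by omega
      have e3 : (j + 1) % 2 = 0 := by omega
      have e4 : (j + 1) / 2 = i + 1 := by omega
      simp only [e1, e2, e3, e4]
      simpa using (hc i hik).1.2
  · -- even points agree with `a`
    intro i _
    have h1 : 2 * i % 2 = 0 := by omega
    have h2 : 2 * i / 2 = i := by omega
    simp [h1, h2]
  · -- the bijection property
    intro j hj
    -- the XOR map agrees with `x ↦ |2 f x - 1|` on `[0,1]`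
    have hcongr : ∀ s : Set ℝ, s ⊆ Set.Icc (0:ℝ) 1 →
        Set.BijOn (fun x => |2 * f x - 1|) s (Set.Ioo 0 1) →
        Set.BijOn (fun x => |f x - g x|) s (Set.Ioo 0 1) := by
      intro s hs hb
      refine hb.congr fun x hx => ?_
      rw [hmirror x (hs hx)]
      ring_nf
    rcases Nat.even_or_odd j with ⟨i, hi⟩ | ⟨i, hi⟩
    · have hik : i < k := by omega
      have e1 : j % 2 = 0 := by omega
      have e2 : j / 2 = i := by omega
      have e3 : (j + 1) % 2 = 1 := by omega
      have e4 : (j + 1) / 2 = i := by omega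
      simp only [e1, e2, e3, e4, if_pos rfl]
      obtain ⟨hcm, hL, _⟩ := hc i hik
      refine hcongr _ (fun x hx => ?_) (by simpa using hL)
      have h0 : (0:ℝ) ≤ a i := ha0 ▸ hmono 0 i (by omega) (by omega)
      have h1 : a (i + 1) ≤ 1 := hak ▸ hmono (i + 1) k (by omega) le_rfl
      exact ⟨le_of_lt (lt_of_le_of_lt h0 hx.1),
        le_of_lt (lt_of_lt_of_le (hx.2.trans hcm.2) h1)⟩
    · have hik : i < k := by omega
      have e1 : j % 2 = 1 := by omega
      have e2 : j / 2 = i := by omega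
      have e3 : (j + 1) % 2 = 0 := by omega
      have e4 : (j + 1) / 2 = i + 1 := by omega
      simp only [e1, e2, e3, e4]
      obtain ⟨hcm, _, hR⟩ := hc i hik
      refine hcongr _ (fun x hx => ?_) (by simpa using hR)
      have h0 : (0:ℝ) ≤ a i := ha0 ▸ hmono 0 i (by omega) (by omega)
      have h1 : a (i + 1) ≤ 1 := hak ▸ hmono (i + 1) k (by omega) le_rfl
      exact ⟨le_of_lt (lt_of_le_of_lt h0 (hcm.1.trans hx.1)),
        le_of_lt (lt_of_lt_of_le hx.2 h1)⟩
end

section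
/- The map H : [0,1] → [0,1] defined by H(x) = |2·|2x − 1| − 1| (the fuzzy XOR combination of the inverted tent map x ↦ |2x − 1| with its mirror image x ↦ 1 − |2x − 1|) is topologically transitive on [0,1], and hence chaotic in the sense of Devaney. -/
noncomputable def psi (t : ℝ) : ℝ := |2 * Int.fract t - 1|

lemma psi_mem (t : ℝ) : psi t ∈ Set.Icc (0:ℝ) 1 := by
  have h0 := Int.fract_nonneg t
  have h1 := Int.fract_lt_one t
  refine ⟨abs_nonneg _, ?_⟩
  rw [psi, abs_le]; constructor <;> linarith

lemma psi_int_add (t : ℝ) (m : ℤ) : psi (t + m) = psi t := by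
  simp [psi, Int.fract_add_intCast]

lemma psi_eq (s : ℝ) : psi s = |2 * s - (2 * (⌊s⌋:ℝ) + 1)| := by
  rw [psi]; congr 1; rw [Int.fract]; ring

lemma psi_le_abs (s : ℝ) (m : ℤ) : psi s ≤ |2 * s - (2 * (m:ℝ) + 1)| := by
  rcases eq_or_ne m ⌊s⌋ with h | h
  · rw [h, ← psi_eq]
  · have hf0 : (⌊s⌋:ℝ) ≤ s := Int.floor_le s
    have hf1 : s < ⌊s⌋ + 1 := Int.lt_floor_add_one s
    have hp : psi s ≤ 1 := (psi_mem s).2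
    have hm : (m:ℝ) ≤ (⌊s⌋:ℝ) - 1 ∨ (⌊s⌋:ℝ) + 1 ≤ (m:ℝ) := by
      rcases lt_or_gt_of_ne h with h' | h'
      · left; exact_mod_cast Int.le_sub_one_of_lt h'
      · right; exact_mod_cast h'
    rw [le_abs]
    rcases hm with h' | h'
    · left; linarith
    · right; linarith

lemma psi_lip (s t : ℝ) : |psi s - psi t| ≤ 2 * |s - t| := by
  have key : ∀ a b : ℝ, psi a - psi b ≤ 2 * |a - b| := by
    intro a b
    have h1 := psi_le_abs a ⌊b⌋
    have h2 : psi b = |2*b - (2*(⌊b⌋:ℝ)+1)| := psi_eq b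
    have h3 : |2*a - (2*(⌊b⌋:ℝ)+1)| ≤ |2*a - 2*b| + |2*b - (2*(⌊b⌋:ℝ)+1)| :=
      abs_sub_le _ _ _
    have h4 : |2*a - 2*b| = 2 * |a - b| := by
      rw [show (2*a - 2*b : ℝ) = 2*(a-b) by ring, abs_mul]; norm_num
    linarith
  rw [abs_sub_le_iff]
  exact ⟨key s t, by rw [abs_sub_comm]; exact key t s⟩

lemma g_psi (t : ℝ) : |2 * psi t - 1| = psi (2 * t) := by
  have h0 := Int.fract_nonneg t
  have h1 := Int.fract_lt_one t
  have hfr : Int.fract (2 * t) = Int.fract (2 * Int.fract t) := by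
    conv_lhs => rw [show 2*t = 2 * Int.fract t + ((2 * ⌊t⌋ : ℤ):ℝ) by
      rw [Int.fract]; push_cast; ring]
    rw [Int.fract_add_intCast]
  simp only [psi]
  rw [hfr]
  set u := Int.fract t with hu
  by_cases hc : u < 1/2
  · rw [Int.fract_eq_self.mpr ⟨by linarith, by linarith⟩]
    rw [abs_of_nonpos (by linarith : 2*u - 1 ≤ 0)]
    rw [show (2:ℝ) * -(2*u - 1) - 1 = -(2*(2*u) - 1) by ring, abs_neg]
  · push_neg at hc
    have h2 : Int.fract (2*u) = 2*u - 1 := by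
      rw [show (2:ℝ)*u = (2*u - 1) + ((1:ℤ):ℝ) by rw [Int.cast_one]; ring, Int.fract_add_intCast,
        Int.fract_eq_self.mpr ⟨by linarith, by linarith⟩]
      push_cast; ring
    rw [h2, abs_of_nonneg (by linarith : (0:ℝ) ≤ 2*u - 1)]

lemma Hiter (n : ℕ) (t : ℝ) :
    (fun x : ℝ => |2 * |2 * x - 1| - 1|)^[n] (psi t) = psi (4^n * t) := by
  induction n generalizing t with
  | zero => simp
  | succ n ih =>
    rw [Function.iterate_succ_apply]
    have hstep : |2 * |2 * psi t - 1| - 1| = psi (4 * t) := by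
      rw [g_psi, g_psi, show 2*(2*t) = 4*t by ring]
    rw [hstep, ih, show (4:ℝ)^(n+1) * t = 4^n * (4*t) by ring]

lemma psi_eval {x : ℝ} (hx : x ∈ Set.Icc (0:ℝ) 1) : psi ((1-x)/2) = x := by
  have h : Int.fract ((1-x)/2) = (1-x)/2 :=
    Int.fract_eq_self.mpr ⟨by linarith [hx.2], by linarith [hx.1]⟩
  rw [psi, h, show 2*((1-x)/2) - 1 = -x by ring, abs_neg, abs_of_nonneg hx.1]

lemma exists_n (ε : ℝ) (hε : 0 < ε) : ∃ n : ℕ, 0 < n ∧ 2 / (4:ℝ)^n < ε := by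
  obtain ⟨n, hn⟩ := exists_pow_lt_of_lt_one (show (0:ℝ) < ε/2 by linarith)
    (show (1/4:ℝ) < 1 by norm_num)
  refine ⟨n+1, Nat.succ_pos _, ?_⟩
  have h1 : ((1:ℝ)/4)^(n+1) ≤ (1/4)^n :=
    pow_le_pow_of_le_one (by norm_num) (by norm_num) (Nat.le_succ n)
  have h2 : ((1:ℝ)/4)^(n+1) = 1/4^(n+1) := by rw [div_pow, one_pow]
  have h3 : (0:ℝ) < 4^(n+1) := by positivity
  have h4 : 1/4^(n+1) < ε/2 := h2 ▸ lt_of_le_of_lt h1 hn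
  rw [div_lt_iff₀ h3] at h4 ⊢
  nlinarith

lemma Htrans :
    ∀ U V : Set ℝ, IsOpen U → IsOpen V →
      (U ∩ Set.Icc 0 1).Nonempty → (V ∩ Set.Icc 0 1).Nonempty →
      ∃ n : ℕ, 0 < n ∧
        (U ∩ (fun x : ℝ => |2 * |2 * x - 1| - 1|)^[n] ⁻¹' V ∩ Set.Icc 0 1).Nonempty := by
  intro U V hU hV hUne hVne
  obtain ⟨x, hxU, hxI⟩ := hUne
  obtain ⟨y, hyV, hyI⟩ := hVne
  obtain ⟨ε, hε, hball⟩ := Metric.isOpen_iff.mp hU x hxU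
  obtain ⟨n, hn, hlt⟩ := exists_n ε hε
  have h4 : (0:ℝ) < 4^n := by positivity
  set t0 : ℝ := (1 - x)/2 with ht0
  set t1 : ℝ := (1 - y)/2 with ht1
  set w : ℝ := 4^n * t0 - t1 with hw
  set t : ℝ := (t1 + (⌊w⌋:ℝ)) / 4^n with ht
  have hfr0 := Int.fract_nonneg w
  have hfr1 := Int.fract_lt_one w
  have hdt : t - t0 = -(Int.fract w) / 4^n := by
    rw [← Int.self_sub_floor w, eq_div_iff (ne_of_gt h4), ht, hw, sub_mul,
      div_mul_cancel₀ _ (ne_of_gt h4)]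
    ring
  have hzx : |psi t - x| < ε := by
    have hx' : x = psi t0 := (psi_eval hxI).symm
    have h1 : |psi t - psi t0| ≤ 2 * |t - t0| := psi_lip t t0
    have h2 : |t - t0| = Int.fract w / 4^n := by
      rw [hdt, abs_div, abs_neg, abs_of_nonneg hfr0, abs_of_pos h4]
    have h3 : Int.fract w / 4^n < 1 / 4^n := by gcongr
    calc |psi t - x| = |psi t - psi t0| := by rw [← hx']
      _ ≤ 2 * |t - t0| := h1
      _ = 2 * (Int.fract w / 4^n) := by rw [h2]
      _ < 2 * (1/4^n) := by linarith
      _ = 2 / 4^n := by ring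
      _ < ε := hlt
  have hmap : (fun x : ℝ => |2 * |2 * x - 1| - 1|)^[n] (psi t) = y := by
    rw [Hiter]
    have : (4:ℝ)^n * t = t1 + (⌊w⌋:ℝ) := by
      rw [ht, mul_comm, div_mul_cancel₀ _ (ne_of_gt h4)]
    rw [this, psi_int_add, psi_eval hyI]
  refine ⟨n, hn, psi t, ⟨⟨?_, ?_⟩, psi_mem t⟩⟩
  · exact hball (by rw [Metric.mem_ball, Real.dist_eq]; exact hzx)
  · exact Set.mem_preimage.mpr (hmap ▸ hyV)

lemma Hdense :
    ∀ x ∈ Set.Icc (0:ℝ) 1, ∀ ε > (0:ℝ), ∃ y ∈ Set.Icc (0:ℝ) 1, |x - y| < ε ∧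
      ∃ p : ℕ, 0 < p ∧ (fun x : ℝ => |2 * |2 * x - 1| - 1|)^[p] y = y := by
  intro x hx ε hε
  obtain ⟨p, hp, hlt⟩ := exists_n (ε/2) (by linarith)
  have hA : (4:ℝ) ≤ 4^p := by
    calc (4:ℝ) = 4^1 := (pow_one 4).symm
    _ ≤ 4^p := pow_le_pow_right₀ (by norm_num) hp
  set t0 : ℝ := (1 - x)/2 with ht0
  set N : ℝ := 4^p - 1 with hN
  have hNpos : (0:ℝ) < N := by rw [hN]; linarith
  set t : ℝ := (⌊t0 * N⌋:ℝ) / N with ht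
  have hfr0 := Int.fract_nonneg (t0 * N)
  have hfr1 := Int.fract_lt_one (t0 * N)
  have hdt : t0 - t = Int.fract (t0 * N) / N := by
    rw [← Int.self_sub_floor (t0 * N), eq_div_iff (ne_of_gt hNpos), ht, sub_mul,
      div_mul_cancel₀ _ (ne_of_gt hNpos)]
  refine ⟨psi t, psi_mem t, ?_, p, hp, ?_⟩
  · have hx' : x = psi t0 := (psi_eval hx).symm
    have h1 : |psi t0 - psi t| ≤ 2 * |t0 - t| := psi_lip t0 t
    have h2 : |t0 - t| = Int.fract (t0 * N) / N := by
      rw [hdt, abs_of_nonneg (by positivity)]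
    have h3 : Int.fract (t0 * N) / N < 1 / N := by gcongr
    have h4 : 1 / N ≤ 2 / 4^p := by
      rw [div_le_div_iff₀ hNpos (by positivity)]
      rw [hN]; linarith
    calc |x - psi t| = |psi t0 - psi t| := by rw [← hx']
      _ ≤ 2 * |t0 - t| := h1
      _ = 2 * (Int.fract (t0 * N) / N) := by rw [h2]
      _ < 2 * (2 / 4^p) := by linarith
      _ < 2 * (ε/2) := by linarith
      _ = ε := by ring
  · rw [Hiter]
    have h5 : (4:ℝ)^p * t = t + (⌊t0 * N⌋:ℝ) := by
      apply mul_right_cancel₀ (ne_of_gt hNpos)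
      rw [ht, mul_assoc, div_mul_cancel₀ _ (ne_of_gt hNpos), add_mul,
        div_mul_cancel₀ _ (ne_of_gt hNpos), hN]
      ring
    rw [h5, psi_int_add]

lemma Hsens :
    ∃ ε > (0:ℝ), ∀ x ∈ Set.Icc (0:ℝ) 1, ∀ δ > (0:ℝ), ∃ y ∈ Set.Icc (0:ℝ) 1,
      |x - y| < δ ∧ ∃ n : ℕ, ε ≤ |(fun x : ℝ => |2 * |2 * x - 1| - 1|)^[n] x -
        (fun x : ℝ => |2 * |2 * x - 1| - 1|)^[n] y| := by
  refine ⟨1/2, by norm_num, ?_⟩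
  intro x hx δ hδ
  obtain ⟨n, hn, hlt⟩ := exists_n δ hδ
  have h4 : (0:ℝ) < 4^n := by positivity
  set t0 : ℝ := (1 - x)/2 with ht0
  set k : ℤ := ⌊(4:ℝ)^n * t0⌋ with hk
  have hfr0 := Int.fract_nonneg ((4:ℝ)^n * t0)
  have hfr1 := Int.fract_lt_one ((4:ℝ)^n * t0)
  have hx' : x = psi t0 := (psi_eval hx).symm
  have hHx : (fun x : ℝ => |2 * |2 * x - 1| - 1|)^[n] x = psi (4^n * t0) := by
    rw [hx', Hiter]
  have hw0 := (psi_mem ((4:ℝ)^n * t0)).1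
  have hw1 := (psi_mem ((4:ℝ)^n * t0)).2
  have psi_k : psi ((k:ℝ)) = 1 := by
    rw [psi, Int.fract_intCast]; norm_num
  have psi_kh : psi ((k:ℝ) + 1/2) = 0 := by
    rw [show (k:ℝ) + 1/2 = 1/2 + (k:ℝ) by ring, psi_int_add, psi,
      Int.fract_eq_self.mpr ⟨by norm_num, by norm_num⟩]
    norm_num
  by_cases hc : psi ((4:ℝ)^n * t0) ≤ 1/2
  · set t : ℝ := (k:ℝ) / 4^n with htdef
    have hdt : t0 - t = Int.fract (4^n * t0) / 4^n := by
      rw [← Int.self_sub_floor ((4:ℝ)^n * t0), eq_div_iff (ne_of_gt h4), htdef, hk, sub_mul,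
        div_mul_cancel₀ _ (ne_of_gt h4)]
      ring
    have hmap : (4:ℝ)^n * t = (k:ℝ) := by
      rw [htdef, mul_comm, div_mul_cancel₀ _ (ne_of_gt h4)]
    refine ⟨psi t, psi_mem t, ?_, n, ?_⟩
    · calc |x - psi t| = |psi t0 - psi t| := by rw [← hx']
        _ ≤ 2 * |t0 - t| := psi_lip t0 t
        _ = 2 * (Int.fract (4^n * t0) / 4^n) := by
            rw [hdt, abs_of_nonneg (by positivity)]
        _ < 2 * (1 / 4^n) := by
            have : Int.fract ((4:ℝ)^n * t0) / 4^n < 1 / 4^n := by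
              gcongr
            linarith
        _ = 2 / 4^n := by ring
        _ < δ := hlt
    · rw [hHx, Hiter, hmap, psi_k, abs_of_nonpos (by linarith)]
      linarith
  · push_neg at hc
    set t : ℝ := ((k:ℝ) + 1/2) / 4^n with htdef
    have hdt : t0 - t = (Int.fract (4^n * t0) - 1/2) / 4^n := by
      rw [← Int.self_sub_floor ((4:ℝ)^n * t0), eq_div_iff (ne_of_gt h4), htdef, hk, sub_mul,
        div_mul_cancel₀ _ (ne_of_gt h4)]
      ring
    have hmap : (4:ℝ)^n * t = (k:ℝ) + 1/2 := by
      rw [htdef, mul_comm, div_mul_cancel₀ _ (ne_of_gt h4)]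
    refine ⟨psi t, psi_mem t, ?_, n, ?_⟩
    · calc |x - psi t| = |psi t0 - psi t| := by rw [← hx']
        _ ≤ 2 * |t0 - t| := psi_lip t0 t
        _ = 2 * (|Int.fract (4^n * t0) - 1/2| / 4^n) := by
            rw [hdt, abs_div, abs_of_pos h4]
        _ ≤ 2 * ((1/2) / 4^n) := by
            have h5 : |Int.fract ((4:ℝ)^n * t0) - 1/2| ≤ 1/2 := by
              rw [abs_le]; constructor <;> linarith
            have : |Int.fract ((4:ℝ)^n * t0) - 1/2| / 4^n ≤ (1/2) / 4^n := by gcongr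
            linarith
        _ = 1 / 4^n := by ring
        _ < δ := by
            have : (1:ℝ)/4^n < 2/4^n := by gcongr <;> norm_num
            linarith
    · rw [hHx, Hiter, hmap, psi_kh, sub_zero, abs_of_nonneg hw0]
      linarith



/-- Topological transitivity of `h` on the set `I`. -/
def IsTransitiveOn (h : ℝ → ℝ) (I : Set ℝ) : Prop :=
  ∀ U V : Set ℝ, IsOpen U → IsOpen V → (U ∩ I).Nonempty → (V ∩ I).Nonempty →
    ∃ n : ℕ, 0 < n ∧ (U ∩ h^[n] ⁻¹' V ∩ I).Nonempty

/-- The periodic points of `h` are dense in `I`. -/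
def DensePeriodicOn (h : ℝ → ℝ) (I : Set ℝ) : Prop :=
  ∀ x ∈ I, ∀ ε > (0 : ℝ), ∃ y ∈ I, |x - y| < ε ∧ ∃ p : ℕ, 0 < p ∧ h^[p] y = y

/-- `h` has sensitive dependence on initial conditions on `I`. -/
def SensitiveOn (h : ℝ → ℝ) (I : Set ℝ) : Prop :=
  ∃ ε > (0 : ℝ), ∀ x ∈ I, ∀ δ > (0 : ℝ), ∃ y ∈ I,
    |x - y| < δ ∧ ∃ n : ℕ, ε ≤ |h^[n] x - h^[n] y|

/-- The map `H(x) = |2|2x - 1| - 1|` (the fuzzy XOR combination of the inverted tent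
map `x ↦ |2x - 1|` with its mirror image `x ↦ 1 - |2x - 1|`) is topologically
transitive on `[0,1]`, and hence Devaney chaotic. -/
theorem xorTent_transitive_and_chaotic :
    IsTransitiveOn (fun x : ℝ => |2 * |2 * x - 1| - 1|) (Set.Icc 0 1) ∧
      (IsTransitiveOn (fun x : ℝ => |2 * |2 * x - 1| - 1|) (Set.Icc 0 1) ∧
        DensePeriodicOn (fun x : ℝ => |2 * |2 * x - 1| - 1|) (Set.Icc 0 1) ∧
        SensitiveOn (fun x : ℝ => |2 * |2 * x - 1| - 1|) (Set.Icc 0 1)) := by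
  exact ⟨Htrans, Htrans, Hdense, Hsens⟩
end
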